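/- For all natural numbers n ≥ 2 and c ≥ 1, if m_c^(2n)·C_n^c ≥ (2n)!/(n!·2^n) then c ≥ (log n)/(4 log log n) − 2, where m_c = ((2c)!/(2^c·c!))·2c and C_n is the n-th Catalan number; equivalently, c = Ω(log n / log log n). -/
import Mathlib
open Real

-- Lemma A: 2^n * (n! * n!) ≤ (2n)!
lemma lemA : ∀ n : ℕ, 2 ^ n * (n.factorial * n.factorial) ≤ (2 * n).factorial := by
  intro n
  induction n with
  | zero => simp
  | succ k ih =>
    have h2 : 2 * (k + 1) = (2 * k + 1) + 1 := by ring
    rw [h2, Nat.factorial_succ, Nat.factorial_succ, Nat.factorial_succ]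
    calc 2 ^ (k+1) * ((k+1) * k.factorial * ((k+1) * k.factorial))
        = (2*(k+1)) * (k+1) * (2 ^ k * (k.factorial * k.factorial)) := by ring
      _ ≤ ((2*k+1)+1) * ((2*k)+1) * (2 * k).factorial := by
          apply Nat.mul_le_mul
          apply Nat.mul_le_mul <;> omega
          exact ih
      _ = ((2*k+1)+1) * ((2*k+1) * (2*k).factorial) := by
          rw [Nat.mul_assoc]

-- Lemma B: (a+b)! ≤ a! * (a+b)^b
lemma lemB (a : ℕ) : ∀ b : ℕ, (a + b).factorial ≤ a.factorial * (a + b) ^ b := by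
  intro b
  induction b with
  | zero => simp
  | succ k ih =>
    have : a + (k+1) = (a + k) + 1 := by ring
    rw [this, Nat.factorial_succ]
    calc (a+k+1) * (a+k).factorial ≤ (a+k+1) * (a.factorial * (a+k) ^ k) := by
          exact Nat.mul_le_mul_left _ ih
      _ ≤ a.factorial * (a + k + 1) ^ (k+1) := by
          rw [pow_succ]
          have : (a+k)^k ≤ (a+k+1)^k := Nat.pow_le_pow_left (by omega) k
          calc (a+k+1) * (a.factorial * (a+k)^k) ≤ (a+k+1) * (a.factorial * (a+k+1)^k) :=
                Nat.mul_le_mul_left _ (Nat.mul_le_mul_left _ this)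
            _ = a.factorial * ((a+k+1)^k * (a+k+1)) := by ring

-- Lemma C: catalan n ≤ 4^n
lemma lemC (n : ℕ) : catalan n ≤ 4 ^ n := by
  have h1 : catalan n ≤ n.centralBinom := by
    rw [← succ_mul_catalan_eq_centralBinom]
    exact Nat.le_mul_of_pos_left _ (Nat.succ_pos n)
  have h2 : n.centralBinom ≤ (2*n+1).choose n := by
    rw [Nat.centralBinom_eq_two_mul_choose]
    exact Nat.choose_le_choose n (by omega)
  exact le_trans h1 (le_trans h2 (Nat.choose_middle_le_pow n))

-- Lemma D: n^n ≤ e^n * n!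
lemma lemD : ∀ n : ℕ, (n : ℝ) ^ n ≤ Real.exp n * n.factorial := by
  intro n
  induction n with
  | zero => simp
  | succ k ih =>
    have hstep : ((k : ℝ) + 1) ^ k ≤ Real.exp 1 * (k : ℝ) ^ k := by
      rcases Nat.eq_zero_or_pos k with hk | hk
      · subst hk; simp [Real.one_le_exp_iff]
      · have hk0 : (0:ℝ) < k := by positivity
        have h1 : ((k:ℝ)+1) = k * (1 + 1/k) := by field_simp
        rw [h1, mul_pow, mul_comm]
        gcongr
        have h2 : (1 + 1/(k:ℝ)) ≤ Real.exp (1/k) := by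
          have := Real.add_one_le_exp (1/(k:ℝ)); linarith
        calc (1 + 1/(k:ℝ)) ^ k ≤ (Real.exp (1/k)) ^ k := by
              apply pow_le_pow_left₀ (by positivity) h2
          _ = Real.exp (k * (1/k)) := by rw [← Real.exp_nat_mul]
          _ = Real.exp 1 := by rw [mul_one_div, div_self hk0.ne']
    have hk1 : (0:ℝ) ≤ (k:ℝ) + 1 := by positivity
    have hfac : (Nat.factorial k : ℝ) ≥ 0 := by positivity
    push_cast [Nat.factorial_succ, pow_succ]
    calc ((k:ℝ)+1) ^ k * ((k:ℝ)+1) = ((k:ℝ)+1) * ((k:ℝ)+1)^k := by ring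
      _ ≤ ((k:ℝ)+1) * (Real.exp 1 * (k:ℝ)^k) := by gcongr
      _ ≤ ((k:ℝ)+1) * (Real.exp 1 * (Real.exp k * k.factorial)) := by
          have he : (0:ℝ) < Real.exp 1 := Real.exp_pos 1
          nlinarith [ih, Real.exp_pos (k:ℝ), mul_le_mul_of_nonneg_left ih (mul_nonneg hk1 he.le)]
      _ = Real.exp ((k:ℝ)+1) * (((k:ℝ)+1) * k.factorial) := by
          rw [Real.exp_add]; ring

lemma lemE {L LL lc l2 cr : ℝ} (hL : 20.7 ≤ L) (hLL : 3 ≤ LL) (hc : 1 ≤ cr)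
    (hl2a : l2 < 0.6931471808) (hlc : lc ≤ LL)
    (hmain : L ≤ 1 + (2*(cr+1)*(l2+lc) + 2*cr*l2))
    (hcon : (cr+2)*(4*LL) < L) : False := by
  have p1 : 2*(cr+1)*lc ≤ 2*(cr+1)*LL := mul_le_mul_of_nonneg_left hlc (by linarith)
  have p2 : 2*(cr+1)*LL ≤ 2*(cr+2)*LL := mul_le_mul_of_nonneg_right (by linarith) (by linarith)
  have p3 : 2*(cr+2)*LL < L/2 := by
    have e : 2*(cr+2)*LL = (cr+2)*(4*LL)/2 := by ring
    linarith
  have p4 : (cr+2)*3 ≤ (cr+2)*LL := mul_le_mul_of_nonneg_left hLL (by linarith)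
  have p5 : cr < L/12 := by
    have e : (cr+2)*(4*LL) = 4*((cr+2)*LL) := by ring
    linarith
  have p6 : (4*cr+2)*l2 ≤ (4*cr+2)*0.7 := mul_le_mul_of_nonneg_left (by linarith) (by linarith)
  nlinarith [p1, p2, p3, p6, p5, hmain, hL]

/-- Asymptotically, if `m_c^(2n) * C_n^c ≥ (2n)!/(n! * 2^n)` then
`c + 2 ≥ log n / (4 log log n)`, i.e. `c = Ω(log n / log log n)`. -/
theorem lower_bound_on_c :
    ∃ N : ℕ, ∀ n : ℕ, N ≤ n → ∀ c : ℕ, 1 ≤ c →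
      ((2 * n).factorial : ℝ) / (n.factorial * 2 ^ n) ≤
        ((((2 * c).factorial : ℝ) / (2 ^ c * c.factorial)) * (2 * c)) ^ (2 * n) *
          (catalan n : ℝ) ^ c →
      Real.log n / (4 * Real.log (Real.log n)) ≤ (c : ℝ) + 2 := by
  use 2 ^ 30
  intro n hn c hc h
  have hn0 : 0 < n := lt_of_lt_of_le (by norm_num) hn
  have hnR : (0:ℝ) < n := by exact_mod_cast hn0
  have hcR : (1:ℝ) ≤ c := by exact_mod_cast hc
  have hcR0 : (0:ℝ) < c := by linarith
  set L := Real.log n with hLdef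
  set LL := Real.log L with hLLdef
  -- L ≥ 20.7
  have hl2 : Real.log 2 < 0.6931471808 := Real.log_two_lt_d9
  have hl2' : (0.6931471803:ℝ) < Real.log 2 := Real.log_two_gt_d9
  have hL : (20.7:ℝ) ≤ L := by
    have h1 : ((2:ℝ) ^ 30) ≤ n := by
      have : ((2^30 : ℕ) : ℝ) ≤ n := by exact_mod_cast hn
      push_cast at this; linarith
    have h2 : Real.log ((2:ℝ)^30) ≤ L := Real.log_le_log (by positivity) h1
    rw [Real.log_pow] at h2
    push_cast at h2; linarith
  have hLL : (3:ℝ) ≤ LL := by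
    have hexp3 : Real.exp 3 < 20.2 := by
      have h1 : Real.exp 3 = (Real.exp 1) ^ (3:ℕ) := by
        rw [← Real.exp_nat_mul]; norm_num
      have h2 : (Real.exp 1) ^ (3:ℕ) < 2.7182818286 ^ (3:ℕ) :=
        pow_lt_pow_left₀ Real.exp_one_lt_d9 (Real.exp_pos 1).le (by norm_num)
      nlinarith
    rw [hLLdef, Real.le_log_iff_exp_le (by linarith)]
    linarith
  -- Step 1 : n! ≤ LHS
  have hfacpos : (0:ℝ) < (n.factorial : ℝ) := by positivity
  have hA : ((n.factorial : ℝ)) ≤ ((2*n).factorial : ℝ) / (n.factorial * 2 ^ n) := by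
    rw [le_div_iff₀ (by positivity)]
    have := lemA n
    have hAc : (2:ℝ)^n * ((n.factorial:ℝ) * n.factorial) ≤ ((2*n).factorial : ℝ) := by
      exact_mod_cast this
    nlinarith
  -- Step 2 : m_c ≤ (2c)^(c+1)
  have hm : (((2*c).factorial : ℝ) / (2 ^ c * c.factorial)) * (2 * c) ≤ (2*(c:ℝ)) ^ (c+1) := by
    have hB : ((2*c).factorial : ℝ) ≤ (c.factorial : ℝ) * (2*(c:ℝ)) ^ c := by
      have := lemB c c
      have h2 : ((c+c).factorial : ℝ) ≤ (c.factorial : ℝ) * ((c:ℝ)+c) ^ c := by exact_mod_cast this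
      have he : c + c = 2 * c := by ring
      rw [he] at h2
      have : ((c:ℝ)+c) = 2*(c:ℝ) := by ring
      rw [this] at h2; exact h2
    rw [div_mul_eq_mul_div, div_le_iff₀ (by positivity)]
    have h1 : (1:ℝ) ≤ 2 ^ c := by
      calc (1:ℝ) = 1^c := (one_pow c).symm
        _ ≤ 2^c := by gcongr; norm_num
    have hp : (0:ℝ) < (2*(c:ℝ))^c := by positivity
    calc ((2*c).factorial : ℝ) * (2*(c:ℝ)) ≤ ((c.factorial : ℝ) * (2*(c:ℝ)) ^ c) * (2*(c:ℝ)) := by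
          gcongr
      _ = (2*(c:ℝ))^(c+1) * (1 * c.factorial) := by rw [pow_succ]; ring
      _ ≤ (2*(c:ℝ))^(c+1) * (2^c * c.factorial) := by gcongr
  -- Step 3 : chain
  have hcat : ((catalan n : ℝ)) ≤ (4:ℝ)^n := by exact_mod_cast lemC n
  have hmnn : (0:ℝ) ≤ (((2*c).factorial : ℝ) / (2 ^ c * c.factorial)) * (2 * c) := by positivity
  have hchain : ((n.factorial : ℝ)) ≤ ((2*(c:ℝ))^(c+1))^(2*n) * ((4:ℝ)^n)^c := by
    refine le_trans hA (le_trans h ?_)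
    have hcatnn : (0:ℝ) ≤ (catalan n : ℝ) := by positivity
    have t1 := pow_le_pow_left₀ hmnn hm (2*n)
    have t2 := pow_le_pow_left₀ hcatnn hcat c
    exact mul_le_mul t1 t2 (by positivity) (by positivity)
  -- Step 4 : take logs
  have h2c : (0:ℝ) < 2*(c:ℝ) := by linarith
  have hrpos : (0:ℝ) < ((2*(c:ℝ))^(c+1))^(2*n) * ((4:ℝ)^n)^c := by positivity
  have hlogle : Real.log (n.factorial : ℝ) ≤ Real.log (((2*(c:ℝ))^(c+1))^(2*n) * ((4:ℝ)^n)^c) :=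
    Real.log_le_log hfacpos hchain
  have hlog4 : Real.log 4 = 2 * Real.log 2 := by
    rw [show (4:ℝ) = 2^(2:ℕ) by norm_num, Real.log_pow]; norm_num
  have hlogr : Real.log (((2*(c:ℝ))^(c+1))^(2*n) * ((4:ℝ)^n)^c)
      = (n:ℝ) * (2*((c:ℝ)+1)*Real.log (2*(c:ℝ)) + 2*(c:ℝ)*Real.log 2) := by
    rw [Real.log_mul (by positivity) (by positivity), Real.log_pow, Real.log_pow,
      Real.log_pow, Real.log_pow, hlog4]
    push_cast; ring
  -- Step 5 : lower bound on log n!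
  have hD : (n:ℝ) * L ≤ (n:ℝ) + Real.log (n.factorial : ℝ) := by
    have := lemD n
    have h1 : Real.log ((n:ℝ)^n) ≤ Real.log (Real.exp n * n.factorial) :=
      Real.log_le_log (by positivity) this
    rw [Real.log_pow, Real.log_mul (Real.exp_ne_zero _) (by positivity), Real.log_exp] at h1
    linarith
  -- combine, divide by n
  set A : ℝ := 2*((c:ℝ)+1)*Real.log (2*(c:ℝ)) + 2*(c:ℝ)*Real.log 2 with hAdef
  have hmul : (n:ℝ) * L ≤ (n:ℝ) * (1 + A) := by
    rw [hlogr] at hlogle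
    have : (n:ℝ) * (1 + A) = (n:ℝ) + (n:ℝ) * A := by ring
    rw [this]; linarith
  have hmain : L ≤ 1 + A := le_of_mul_le_mul_left (by linarith [hmul]) hnR
  -- Step 6 : final analysis
  have hlog2c : Real.log (2*(c:ℝ)) = Real.log 2 + Real.log c :=
    Real.log_mul (by norm_num) (by positivity)
  rw [div_le_iff₀ (by positivity : (0:ℝ) < 4 * LL)]
  by_contra hcon
  push_neg at hcon
  -- c ≤ L, hence log c ≤ LL
  have hcL : (c:ℝ) ≤ L := by
    have h12 : ((c:ℝ)+2)*12 ≤ ((c:ℝ)+2)*(4*LL) := mul_le_mul_of_nonneg_left (by linarith) (by linarith)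
    linarith
  have hlc : Real.log c ≤ LL := by
    rw [hLLdef]
    exact Real.log_le_log hcR0 hcL
  simp only [hAdef, hlog2c] at hmain
  exact lemE hL hLL hcR hl2 hlc hmain hcon
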